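/- Let X be a compact Hausdorff space, ∗ a continuous t-norm, and μ : C(X,[0,1]) → [0,1] a functional satisfying: (1) μ(1_X)=1; (2) monotonicity: φ ≤ ψ implies μ(φ) ≤ μ(ψ); (3) comonotone maxitivity: μ(φ∨ψ) = μ(φ)∨μ(ψ) for comonotone φ, ψ; (4) μ(c_X ∗ φ) = c ∗ μ(φ) for all c ∈ [0,1]. Then there exists a unique upper-semicontinuous capacity ν on X such that μ(φ) = ∫^{∨∗} φ dν for all continuous φ : X → [0,1]. Conversely, for every capacity ν the functional φ ↦ ∫^{∨∗} φ dν satisfies (1)–(4). -/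

import Mathlib

open Set

/-- A continuous triangular norm on `[0,1]`, modeled as a binary operation on `ℝ`
restricted to the unit interval. -/
structure Tnorm where
  op : ℝ → ℝ → ℝ
  mem' : ∀ a b : ℝ, a ∈ Set.Icc (0:ℝ) 1 → b ∈ Set.Icc (0:ℝ) 1 → op a b ∈ Set.Icc (0:ℝ) 1
  comm' : ∀ a b : ℝ, op a b = op b a
  assoc' : ∀ a b c : ℝ, op (op a b) c = op a (op b c)
  mono' : ∀ a b c d : ℝ, a ≤ b → c ≤ d → op a c ≤ op b d
  one_id' : ∀ a ∈ Set.Icc (0:ℝ) 1, op a 1 = a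
  cont' : Continuous fun p : ℝ × ℝ => op p.1 p.2

/-- An upper-semicontinuous capacity on a topological space `X`. -/
structure Capacity (X : Type*) [TopologicalSpace X] where
  toFun : Set X → ℝ
  nonneg' : ∀ A : Set X, 0 ≤ toFun A
  le_one' : ∀ A : Set X, toFun A ≤ 1
  empty' : toFun (∅ : Set X) = 0
  univ' : toFun (Set.univ : Set X) = 1
  mono' : ∀ A B : Set X, A ⊆ B → toFun A ≤ toFun B
  usc' : ∀ F : Set X, IsClosed F → ∀ a : ℝ, toFun F < a →
    ∃ O : Set X, IsOpen O ∧ F ⊆ O ∧ ∀ B : Set X, B ⊆ O → IsCompact B → toFun B < a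

/-- Two functions are comonotone (equiordered). -/
def Comonotone {X : Type*} (φ ψ : X → ℝ) : Prop :=
  ∀ x₁ x₂ : X, 0 ≤ (φ x₁ - φ x₂) * (ψ x₁ - ψ x₂)

/-- The t-normed integral `∫^{∨∗} f dν = sup { ν(f⁻¹[t,1]) ∗ t : t ∈ [0,1] }`. -/
noncomputable def tInt {X : Type*} [TopologicalSpace X] (T : Tnorm) (ν : Capacity X)
    (f : X → ℝ) : ℝ :=
  sSup ((fun t : ℝ => T.op (ν.toFun (f ⁻¹' Set.Icc t 1)) t) '' Set.Icc (0:ℝ) 1)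

/-!
The capacity is recovered from `μ` as `ν(A) = inf {μ φ | 1_A ≤ φ}`. Urysohn functions between a
closed set and an open set `{φ > s}` turn the homogeneity `μ(c ∗ ψ) = c ∗ μ(ψ)` into
`s ∗ ν(B) ≤ μ φ` whenever `B ⊆ {φ > s}`; this gives upper semicontinuity of `ν` and, letting
`s ↑ t`, the inequality `ν(φ ≥ t) ∗ t ≤ μ φ`. Conversely, `φ` lies below the maximum of the
functions `((i+1)/n) ∗ ramp_i(φ)`, where `ramp_i` rises from `0` at `(i-1)/n` to `1` at `i/n`.
They are comonotone, being monotone functions of `φ`, so comonotone maxitivity and uniform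
continuity of `∗` give `μ φ ≤ ∫ φ dν + ε`. For uniqueness, upper semicontinuity of any capacity
`ν'` gives `ν'(F) = inf {∫ φ dν' | 1_F ≤ φ}` on closed sets `F`.
-/

open Filter Topology

namespace Tnorm

variable (T : Tnorm) {a b : ℝ}

lemma one_op (ha : a ∈ Icc (0:ℝ) 1) : T.op 1 a = a :=
  T.comm' 1 a ▸ T.one_id' a ha

lemma op_le_left (ha : a ∈ Icc (0:ℝ) 1) (hb : b ≤ 1) : T.op a b ≤ a :=
  (T.mono' a a b 1 le_rfl hb).trans_eq (T.one_id' a ha)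

lemma op_zero (ha : a ∈ Icc (0:ℝ) 1) : T.op a 0 = 0 :=
  le_antisymm ((T.mono' a 1 0 0 ha.2 le_rfl).trans_eq (T.one_op (by norm_num)))
    (T.mem' a 0 ha (by norm_num)).1

lemma zero_op (ha : a ∈ Icc (0:ℝ) 1) : T.op 0 a = 0 :=
  T.comm' 0 a ▸ T.op_zero ha

lemma op_left_comm (a b c : ℝ) : T.op a (T.op b c) = T.op b (T.op a c) := by
  rw [← T.assoc', T.comm' a b, T.assoc']

lemma monotone_op (a : ℝ) : Monotone (T.op a) :=
  fun _ _ h => T.mono' a a _ _ le_rfl h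

lemma continuous_op {α : Type*} [TopologicalSpace α] {f g : α → ℝ} (hf : Continuous f)
    (hg : Continuous g) : Continuous fun x => T.op (f x) (g x) :=
  T.cont'.comp (hf.prodMk hg)

lemma continuous_op_right (a : ℝ) : Continuous (T.op a) :=
  T.continuous_op continuous_const continuous_id

lemma exists_pos_dist_op_lt {ε : ℝ} (hε : 0 < ε) :
    ∃ δ > 0, ∀ a ∈ Icc (0:ℝ) 1, ∀ b ∈ Icc (0:ℝ) 1, ∀ v ∈ Icc (0:ℝ) 1,
      dist a b < δ → dist (T.op a v) (T.op b v) < ε := by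
  have := ((isCompact_Icc (a := (0:ℝ)) (b := 1)).prod
    (isCompact_Icc (a := (0:ℝ)) (b := 1))).uniformContinuousOn_of_continuous T.cont'.continuousOn
  obtain ⟨δ, hδ, h⟩ := Metric.uniformContinuousOn_iff.mp this ε hε
  refine ⟨δ, hδ, fun a ha b hb v hv hab => h (a, v) ⟨ha, hv⟩ (b, v) ⟨hb, hv⟩ ?_⟩
  simpa [Prod.dist_eq] using hab

end Tnorm

lemma Capacity.mem_Icc {X : Type*} [TopologicalSpace X] (ν : Capacity X) (A : Set X) :
    ν.toFun A ∈ Icc (0:ℝ) 1 :=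
  ⟨ν.nonneg' A, ν.le_one' A⟩

lemma comonotone_comp_of_monotone {X α : Type*} [LinearOrder α] {u v : α → ℝ}
    (hu : Monotone u) (hv : Monotone v) (φ : X → α) :
    Comonotone (fun x => u (φ x)) (fun x => v (φ x)) := by
  intro x₁ x₂
  rcases le_total (φ x₁) (φ x₂) with h | h
  · exact mul_nonneg_of_nonpos_of_nonpos (sub_nonpos.2 (hu h)) (sub_nonpos.2 (hv h))
  · exact mul_nonneg (sub_nonneg.2 (hu h)) (sub_nonneg.2 (hv h))

lemma Comonotone.preimage_Ici_total {X : Type*} {φ ψ : X → ℝ} (h : Comonotone φ ψ) (t : ℝ) :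
    φ ⁻¹' Ici t ⊆ ψ ⁻¹' Ici t ∨ ψ ⁻¹' Ici t ⊆ φ ⁻¹' Ici t := by
  by_contra! hc
  obtain ⟨⟨x₁, hφ₁, hψ₁⟩, ⟨x₂, hψ₂, hφ₂⟩⟩ := And.intro (not_subset.1 hc.1) (not_subset.1 hc.2)
  simp only [mem_preimage, mem_Ici, not_le] at hφ₁ hψ₁ hψ₂ hφ₂
  nlinarith [h x₁ x₂]

lemma preimage_Icc_one_eq_preimage_Ici {X : Type*} {f : X → ℝ} (hf : ∀ x, f x ≤ 1) (t : ℝ) :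
    f ⁻¹' Icc t 1 = f ⁻¹' Ici t := by
  ext x
  simp [hf x]

section tInt

variable {X : Type*} [TopologicalSpace X] (T : Tnorm) (ν : Capacity X) {f g : X → ℝ}

lemma bddAbove_tInt_image (f : X → ℝ) :
    BddAbove ((fun t => T.op (ν.toFun (f ⁻¹' Icc t 1)) t) '' Icc (0:ℝ) 1) :=
  ⟨1, forall_mem_image.2 fun _ ht => (T.mem' _ _ (ν.mem_Icc _) ht).2⟩

lemma le_tInt (f : X → ℝ) {t : ℝ} (ht : t ∈ Icc (0:ℝ) 1) :
    T.op (ν.toFun (f ⁻¹' Icc t 1)) t ≤ tInt T ν f :=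
  le_csSup (bddAbove_tInt_image T ν f) (mem_image_of_mem _ ht)

lemma tInt_le {b : ℝ} (h : ∀ t ∈ Icc (0:ℝ) 1, T.op (ν.toFun (f ⁻¹' Icc t 1)) t ≤ b) :
    tInt T ν f ≤ b :=
  csSup_le ((nonempty_Icc.2 zero_le_one).image _) (forall_mem_image.2 h)

lemma tInt_mem_Icc (f : X → ℝ) : tInt T ν f ∈ Icc (0:ℝ) 1 :=
  ⟨(T.op_zero (ν.mem_Icc _)).symm.trans_le (le_tInt T ν f (by norm_num)),
    tInt_le T ν fun _ ht => (T.mem' _ _ (ν.mem_Icc _) ht).2⟩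

lemma tInt_one : tInt T ν (fun _ => 1) = 1 := by
  refine le_antisymm (tInt_mem_Icc T ν _).2 ?_
  have := le_tInt T ν (fun _ => (1:ℝ)) (t := 1) (by norm_num)
  rwa [preimage_const_of_mem (by norm_num), ν.univ', T.one_op (by norm_num)] at this

lemma tInt_mono (hg : ∀ x, g x ≤ 1) (hfg : ∀ x, f x ≤ g x) : tInt T ν f ≤ tInt T ν g :=
  tInt_le T ν fun t ht => (T.mono' _ _ _ _ (ν.mono' (f ⁻¹' Icc t 1) (g ⁻¹' Icc t 1)
    fun x (hx : f x ∈ Icc t 1) => ⟨hx.1.trans (hfg x), hg x⟩) le_rfl).trans (le_tInt T ν g ht)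

lemma tInt_max (hf : ∀ x, f x ≤ 1) (hg : ∀ x, g x ≤ 1) (hfg : Comonotone f g) :
    tInt T ν (fun x => max (f x) (g x)) = max (tInt T ν f) (tInt T ν g) := by
  have hmax : ∀ x, max (f x) (g x) ≤ 1 := fun x => max_le (hf x) (hg x)
  have hlevel : ∀ t, (fun x => max (f x) (g x)) ⁻¹' Icc t 1 = f ⁻¹' Icc t 1 ∨
      (fun x => max (f x) (g x)) ⁻¹' Icc t 1 = g ⁻¹' Icc t 1 := fun t => by
    have hunion : (fun x => max (f x) (g x)) ⁻¹' Ici t = f ⁻¹' Ici t ∪ g ⁻¹' Ici t := by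
      ext x
      simp
    simp only [preimage_Icc_one_eq_preimage_Ici hmax, preimage_Icc_one_eq_preimage_Ici hf,
      preimage_Icc_one_eq_preimage_Ici hg, hunion]
    rcases hfg.preimage_Ici_total t with h | h
    · exact Or.inr (union_eq_right.2 h)
    · exact Or.inl (union_eq_left.2 h)
  refine le_antisymm (tInt_le T ν fun t ht => ?_)
    (max_le (tInt_mono T ν hmax fun x => le_max_left _ _)
      (tInt_mono T ν hmax fun x => le_max_right _ _))
  rcases hlevel t with h | h <;> rw [h]
  · exact le_max_of_le_left (le_tInt T ν f ht)
  · exact le_max_of_le_right (le_tInt T ν g ht)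

lemma tInt_op_le (hf : ∀ x, f x ∈ Icc (0:ℝ) 1) {c : ℝ} (hc : c ∈ Icc (0:ℝ) 1) :
    tInt T ν (fun x => T.op c (f x)) ≤ T.op c (tInt T ν f) := by
  refine tInt_le T ν fun t ht => ?_
  set L := (fun x => T.op c (f x)) ⁻¹' Icc t 1
  rcases L.eq_empty_or_nonempty with hL | hL
  · rw [hL, ν.empty', T.zero_op ht]
    exact (T.mem' _ _ hc (tInt_mem_Icc T ν f)).1
  have hbdd : BddBelow (f '' L) := ⟨0, forall_mem_image.2 fun x _ => (hf x).1⟩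
  set s₀ := sInf (f '' L)
  have hs₀ : s₀ ∈ Icc (0:ℝ) 1 :=
    ⟨le_csInf (hL.image f) (forall_mem_image.2 fun x _ => (hf x).1),
      (csInf_le hbdd (mem_image_of_mem f hL.some_mem)).trans (hf _).2⟩
  have hts₀ : t ≤ T.op c s₀ := by
    rw [(T.monotone_op c).map_csInf_of_continuousAt (T.continuous_op_right c).continuousAt
      (hL.image f) hbdd]
    exact le_csInf ((hL.image f).image _) (by rintro _ ⟨_, ⟨x, hx, rfl⟩, rfl⟩; exact hx.1)
  have hLs₀ : L ⊆ f ⁻¹' Icc s₀ 1 := fun x hx => ⟨csInf_le hbdd (mem_image_of_mem f hx), (hf x).2⟩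
  calc T.op (ν.toFun L) t ≤ T.op (ν.toFun (f ⁻¹' Icc s₀ 1)) (T.op c s₀) :=
        T.mono' _ _ _ _ (ν.mono' _ _ hLs₀) hts₀
    _ = T.op c (T.op (ν.toFun (f ⁻¹' Icc s₀ 1)) s₀) := T.op_left_comm _ _ _
    _ ≤ T.op c (tInt T ν f) := T.monotone_op c (le_tInt T ν f hs₀)

lemma op_tInt_le (hf : ∀ x, f x ∈ Icc (0:ℝ) 1) {c : ℝ} (hc : c ∈ Icc (0:ℝ) 1) :
    T.op c (tInt T ν f) ≤ tInt T ν (fun x => T.op c (f x)) := by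
  rw [tInt, (T.monotone_op c).map_csSup_of_continuousAt (T.continuous_op_right c).continuousAt
    ((nonempty_Icc.2 zero_le_one).image _) (bddAbove_tInt_image T ν f)]
  refine csSup_le (((nonempty_Icc.2 zero_le_one).image _).image _) ?_
  rintro _ ⟨_, ⟨s, hs, rfl⟩, rfl⟩
  calc T.op c (T.op (ν.toFun (f ⁻¹' Icc s 1)) s)
      = T.op (ν.toFun (f ⁻¹' Icc s 1)) (T.op c s) := T.op_left_comm _ _ _
    _ ≤ T.op (ν.toFun ((fun x => T.op c (f x)) ⁻¹' Icc (T.op c s) 1)) (T.op c s) :=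
        T.mono' _ _ _ _ (ν.mono' _ _ fun x hx =>
          ⟨T.monotone_op c hx.1, (T.mem' _ _ hc (hf x)).2⟩) le_rfl
    _ ≤ _ := le_tInt T ν _ (T.mem' _ _ hc hs)

lemma tInt_op (hf : ∀ x, f x ∈ Icc (0:ℝ) 1) {c : ℝ} (hc : c ∈ Icc (0:ℝ) 1) :
    tInt T ν (fun x => T.op c (f x)) = T.op c (tInt T ν f) :=
  le_antisymm (tInt_op_le T ν hf hc) (op_tInt_le T ν hf hc)

end tInt

structure IsUnitMajorant {X : Type*} [TopologicalSpace X] (A : Set X) (φ : X → ℝ) : Prop where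
  continuous : Continuous φ
  mem_Icc : ∀ x, φ x ∈ Icc (0:ℝ) 1
  eq_one : ∀ x ∈ A, φ x = 1

section capacityOf

variable {X : Type*} [TopologicalSpace X]

noncomputable def capacityOf (μ : (X → ℝ) → ℝ) (A : Set X) : ℝ :=
  sInf (μ '' {φ | IsUnitMajorant A φ})

lemma isUnitMajorant_one (A : Set X) : IsUnitMajorant A fun _ => 1 :=
  ⟨continuous_const, fun _ => by norm_num, fun _ _ => rfl⟩

variable {μ μ' : (X → ℝ) → ℝ} {A : Set X}

lemma le_capacityOf {c : ℝ} (h : ∀ φ, IsUnitMajorant A φ → c ≤ μ φ) : c ≤ capacityOf μ A :=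
  le_csInf ⟨_, _, isUnitMajorant_one A, rfl⟩ (forall_mem_image.2 h)

lemma capacityOf_le (h0 : ∀ ψ, IsUnitMajorant A ψ → 0 ≤ μ ψ) {φ : X → ℝ}
    (hφ : IsUnitMajorant A φ) : capacityOf μ A ≤ μ φ :=
  csInf_le ⟨0, forall_mem_image.2 h0⟩ (mem_image_of_mem μ hφ)

lemma capacityOf_congr
    (h : ∀ φ : X → ℝ, Continuous φ → (∀ x, φ x ∈ Icc (0:ℝ) 1) → μ φ = μ' φ) :
    capacityOf μ A = capacityOf μ' A :=
  congrArg sInf (image_congr fun φ hφ => h φ hφ.continuous hφ.mem_Icc)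

end capacityOf

lemma Capacity.eq_capacityOf_tInt {X : Type*} [TopologicalSpace X] [CompactSpace X]
    [NormalSpace X] (T : Tnorm) (ν : Capacity X) {F : Set X} (hF : IsClosed F) :
    ν.toFun F = capacityOf (tInt T ν) F := by
  refine le_antisymm (le_capacityOf fun φ hφ => ?_) (le_of_forall_gt_imp_ge_of_dense fun a ha => ?_)
  · calc ν.toFun F ≤ ν.toFun (φ ⁻¹' Icc 1 1) := ν.mono' _ _ fun x hx => by simp [hφ.eq_one x hx]
      _ = T.op (ν.toFun (φ ⁻¹' Icc 1 1)) 1 := (T.one_id' _ (ν.mem_Icc _)).symm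
      _ ≤ tInt T ν φ := le_tInt T ν φ (by norm_num)
  obtain ⟨O, hO, hFO, hOa⟩ := ν.usc' F hF a ha
  obtain ⟨ψ, hψ0, hψ1, hψ⟩ := exists_continuous_zero_one_of_isClosed hO.isClosed_compl hF
    (disjoint_compl_left_iff_subset.2 hFO)
  refine (capacityOf_le (fun φ _ => (tInt_mem_Icc T ν φ).1)
    ⟨ψ.continuous, hψ, fun x hx => hψ1 hx⟩).trans (tInt_le T ν fun t ht => ?_)
  rcases ht.1.eq_or_lt with rfl | ht0
  · rw [T.op_zero (ν.mem_Icc _)]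
    exact (ν.nonneg' F).trans ha.le
  have hsub : ψ ⁻¹' Icc t 1 ⊆ O := fun x hx => by
    by_contra hxO
    exact (hx.1.trans_eq (hψ0 hxO)).not_gt ht0
  exact (T.op_le_left (ν.mem_Icc _) ht.2).trans
    (hOa _ hsub (isClosed_Icc.preimage ψ.continuous).isCompact).le

noncomputable def ramp (n i : ℕ) (r : ℝ) : ℝ :=
  projIcc (0:ℝ) 1 zero_le_one (n * r - i + 1)

lemma ramp_mem_Icc (n i : ℕ) (r : ℝ) : ramp n i r ∈ Icc (0:ℝ) 1 :=
  Subtype.prop _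

lemma monotone_ramp (n i : ℕ) : Monotone (ramp n i) := fun _ _ h =>
  Subtype.mono_coe _ (monotone_projIcc _ (by gcongr))

lemma continuous_ramp (n i : ℕ) : Continuous (ramp n i) :=
  continuous_subtype_val.comp (continuous_projIcc.comp (by fun_prop))

lemma ramp_eq_one {n i : ℕ} {r : ℝ} (h : (i:ℝ) ≤ n * r) : ramp n i r = 1 := by
  rw [ramp, projIcc_of_right_le _ (by linarith)]

lemma lt_mul_of_ramp_ne_zero {n i : ℕ} {r : ℝ} (h : ramp n i r ≠ 0) : (i:ℝ) - 1 < n * r := by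
  by_contra! hr
  exact h (by rw [ramp, projIcc_of_le_left _ (by linarith)])

lemma add_one_div_mem_Icc {n i : ℕ} (hi : i < n) : ((i:ℝ) + 1) / n ∈ Icc (0:ℝ) 1 :=
  ⟨by positivity, div_le_one_of_le₀ (by exact_mod_cast hi) (Nat.cast_nonneg n)⟩

lemma max_zero_sub_one_div_mem_Icc {n i : ℕ} (hi : i < n) :
    max 0 (((i:ℝ) - 1) / n) ∈ Icc (0:ℝ) 1 := by
  have hin : (i:ℝ) + 1 ≤ n := by exact_mod_cast hi
  exact ⟨le_max_left _ _, max_le zero_le_one (div_le_one_of_le₀ (by linarith) (by linarith))⟩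

lemma dist_add_one_div_max_zero_sub_one_div_le (n i : ℕ) :
    dist (((i:ℝ) + 1) / n) (max 0 (((i:ℝ) - 1) / n)) ≤ 2 / n := by
  have hle : max 0 (((i:ℝ) - 1) / n) ≤ ((i:ℝ) + 1) / n :=
    max_le (by positivity) (div_le_div_of_nonneg_right (by linarith) (Nat.cast_nonneg n))
  rw [Real.dist_eq, abs_of_nonneg (sub_nonneg.2 hle)]
  linarith [le_max_right 0 (((i:ℝ) - 1) / n), show ((i:ℝ) + 1) / n - (i - 1) / n = 2 / n by ring]

lemma exists_lt_le_mul_le_add_one {n : ℕ} (hn : 0 < n) {r : ℝ} (hr : r ∈ Icc (0:ℝ) 1) :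
    ∃ i < n, (i:ℝ) ≤ n * r ∧ n * r ≤ i + 1 := by
  have hnr : 0 ≤ (n:ℝ) * r := mul_nonneg (Nat.cast_nonneg n) hr.1
  refine ⟨min ⌊(n:ℝ) * r⌋₊ (n - 1), by omega,
    (Nat.cast_le.2 (min_le_left _ _)).trans (Nat.floor_le hnr), ?_⟩
  rcases min_cases ⌊(n:ℝ) * r⌋₊ (n - 1) with ⟨h, -⟩ | ⟨h, -⟩ <;> rw [h]
  · exact (Nat.lt_floor_add_one _).le
  · rw [Nat.cast_sub (by omega), Nat.cast_one, sub_add_cancel]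
    exact mul_le_of_le_one_right (Nat.cast_nonneg n) hr.2

namespace Tnorm

variable (T : Tnorm)

noncomputable def step (n i : ℕ) (r : ℝ) : ℝ :=
  T.op ((i + 1) / n) (ramp n i r)

lemma monotone_step (n i : ℕ) : Monotone (T.step n i) := fun _ _ h =>
  T.monotone_op _ (monotone_ramp n i h)

lemma continuous_step (n i : ℕ) : Continuous (T.step n i) :=
  T.continuous_op continuous_const (continuous_ramp n i)

lemma step_mem_Icc {n i : ℕ} (hi : i < n) (r : ℝ) : T.step n i r ∈ Icc (0:ℝ) 1 :=
  T.mem' _ _ (add_one_div_mem_Icc hi) (ramp_mem_Icc n i r)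

lemma le_sup'_step {n : ℕ} (hn : (Finset.range n).Nonempty) {r : ℝ} (hr : r ∈ Icc (0:ℝ) 1) :
    r ≤ (Finset.range n).sup' hn fun i => T.step n i r := by
  obtain ⟨i, hi, hir, hri⟩ :=
    exists_lt_le_mul_le_add_one (Nat.pos_of_ne_zero (Finset.nonempty_range_iff.1 hn)) hr
  refine Finset.le_sup'_of_le _ (Finset.mem_range.2 hi) ?_
  rw [step, ramp_eq_one hir, T.one_id' _ (add_one_div_mem_Icc hi),
    le_div_iff₀ (by exact_mod_cast (Nat.zero_le i).trans_lt hi), mul_comm]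
  exact hri

end Tnorm

lemma sup'_mem_Icc {ι : Type*} {s : Finset ι} (hs : s.Nonempty) {f : ι → ℝ}
    (hf : ∀ i ∈ s, f i ∈ Icc (0:ℝ) 1) : s.sup' hs f ∈ Icc (0:ℝ) 1 :=
  Finset.sup'_mem _ (fun x hx y hy => sup_ind x y hx hy) s hs f hf


section Functional

variable {X : Type*} [TopologicalSpace X] (T : Tnorm) {μ : (X → ℝ) → ℝ}
  (hone : μ (fun _ => 1) = 1)
  (hmono : ∀ φ ψ : X → ℝ, Continuous φ → Continuous ψ →
    (∀ x, φ x ∈ Icc (0:ℝ) 1) → (∀ x, ψ x ∈ Icc (0:ℝ) 1) → (∀ x, φ x ≤ ψ x) → μ φ ≤ μ ψ)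
  (hmax : ∀ φ ψ : X → ℝ, Continuous φ → Continuous ψ →
    (∀ x, φ x ∈ Icc (0:ℝ) 1) → (∀ x, ψ x ∈ Icc (0:ℝ) 1) →
    Comonotone φ ψ → μ (fun x => max (φ x) (ψ x)) = max (μ φ) (μ ψ))
  (hhom : ∀ c ∈ Icc (0:ℝ) 1, ∀ φ : X → ℝ, Continuous φ → (∀ x, φ x ∈ Icc (0:ℝ) 1) →
    μ (fun x => T.op c (φ x)) = T.op c (μ φ))

include hone hhom in
lemma map_zero_of_op : μ (fun _ => 0) = 0 := by
  have h := hhom 0 (by norm_num) (fun _ => 1) continuous_const fun _ => by norm_num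
  simpa [T.zero_op, hone] using h

include hone hmono hhom in
lemma map_mem_Icc {φ : X → ℝ} (hφc : Continuous φ) (hφ : ∀ x, φ x ∈ Icc (0:ℝ) 1) :
    μ φ ∈ Icc (0:ℝ) 1 :=
  ⟨(map_zero_of_op T hone hhom).symm.trans_le
      (hmono _ _ continuous_const hφc (fun _ => by norm_num) hφ fun x => (hφ x).1),
    (hmono _ _ hφc continuous_const hφ (fun _ => by norm_num) fun x => (hφ x).2).trans_eq hone⟩

include hone hmono hhom in
lemma capacityOf_le_map {A : Set X} {φ : X → ℝ} (hφ : IsUnitMajorant A φ) :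
    capacityOf μ A ≤ μ φ :=
  capacityOf_le (fun _ hψ => (map_mem_Icc T hone hmono hhom hψ.continuous hψ.mem_Icc).1) hφ

include hone hmono hhom in
lemma capacityOf_mem_Icc (A : Set X) : capacityOf μ A ∈ Icc (0:ℝ) 1 :=
  ⟨le_capacityOf fun _ hφ => (map_mem_Icc T hone hmono hhom hφ.continuous hφ.mem_Icc).1,
    (capacityOf_le_map T hone hmono hhom (isUnitMajorant_one A)).trans_eq hone⟩

include hmono in
lemma map_le_capacityOf {A : Set X} {ψ : X → ℝ} (hψc : Continuous ψ)
    (hψ : ∀ x, ψ x ∈ Icc (0:ℝ) 1) (hsupp : ∀ x, ψ x ≠ 0 → x ∈ A) : μ ψ ≤ capacityOf μ A :=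
  le_capacityOf fun φ hφ => hmono _ _ hψc hφ.continuous hψ hφ.mem_Icc fun x => by
    by_cases hx : ψ x = 0
    · exact hx ▸ (hφ.mem_Icc x).1
    · exact (hφ.eq_one x (hsupp x hx)).symm ▸ (hψ x).2

include hone hmono hhom in
lemma op_capacityOf_le [NormalSpace X] {s : ℝ} (hs : s ∈ Icc (0:ℝ) 1) {B : Set X}
    (hB : IsClosed B) {φ : X → ℝ} (hφc : Continuous φ) (hφ : ∀ x, φ x ∈ Icc (0:ℝ) 1)
    (hBφ : B ⊆ {x | s < φ x}) : T.op s (capacityOf μ B) ≤ μ φ := by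
  obtain ⟨ψ, hψ0, hψ1, hψ⟩ := exists_continuous_zero_one_of_isClosed
    (isOpen_lt continuous_const hφc).isClosed_compl hB (disjoint_compl_left_iff_subset.2 hBφ)
  have hle : ∀ x, T.op s (ψ x) ≤ φ x := fun x => by
    by_cases hx : s < φ x
    · exact (T.op_le_left hs (hψ x).2).trans hx.le
    · rw [hψ0 hx, Pi.zero_apply, T.op_zero hs]
      exact (hφ x).1
  calc T.op s (capacityOf μ B) ≤ T.op s (μ ψ) :=
        T.monotone_op s (capacityOf_le_map T hone hmono hhom ⟨ψ.continuous, hψ, fun x hx => hψ1 hx⟩)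
    _ = μ (fun x => T.op s (ψ x)) := (hhom s hs ψ ψ.continuous hψ).symm
    _ ≤ μ φ := hmono _ _ (T.continuous_op continuous_const ψ.continuous) hφc
        (fun x => T.mem' _ _ hs (hψ x)) hφ hle

include hone hmono hhom in
lemma capacityOf_usc [NormalSpace X] [T2Space X] {F : Set X} {a : ℝ}
    (ha : capacityOf μ F < a) :
    ∃ O : Set X, IsOpen O ∧ F ⊆ O ∧ ∀ B : Set X, B ⊆ O → IsCompact B → capacityOf μ B < a := by
  rcases lt_or_ge 1 a with h1 | h1
  · exact ⟨univ, isOpen_univ, subset_univ F,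
      fun B _ _ => (capacityOf_mem_Icc T hone hmono hhom B).2.trans_lt h1⟩
  obtain ⟨_, ⟨φ, hφ, rfl⟩, hφa⟩ :=
    exists_lt_of_csInf_lt (s := μ '' {φ | IsUnitMajorant F φ}) ⟨_, _, isUnitMajorant_one F, rfl⟩ ha
  have ha0 : a ∈ Icc (0:ℝ) 1 := ⟨(capacityOf_mem_Icc T hone hmono hhom F).1.trans ha.le, h1⟩
  have hcont : Continuous fun t => T.op t a := T.continuous_op continuous_id continuous_const
  have hlim : Tendsto (fun t => T.op t a) (𝓝[<] 1) (𝓝 a) := by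
    simpa only [T.one_op ha0] using (hcont.tendsto 1).mono_left nhdsWithin_le_nhds
  obtain ⟨t, ⟨ht0, ht1⟩, hta⟩ :=
    (Filter.Eventually.and (Ioo_mem_nhdsLT zero_lt_one) (hlim.eventually_const_lt hφa)).exists
  refine ⟨{x | t < φ x}, isOpen_lt continuous_const hφ.continuous,
    fun x hx => by simp [hφ.eq_one x hx, ht1], fun B hBO hB => ?_⟩
  by_contra! haB
  have := op_capacityOf_le T hone hmono hhom ⟨ht0.le, ht1.le⟩ hB.isClosed hφ.continuous
    hφ.mem_Icc hBO
  linarith [T.monotone_op t haB]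

noncomputable def inducedCapacity [NormalSpace X] [T2Space X] : Capacity X where
  toFun := capacityOf μ
  nonneg' A := (capacityOf_mem_Icc T hone hmono hhom A).1
  le_one' A := (capacityOf_mem_Icc T hone hmono hhom A).2
  empty' := le_antisymm ((capacityOf_le_map T hone hmono hhom
      ⟨continuous_const, fun _ => by norm_num, fun _ h => h.elim⟩).trans_eq
      (map_zero_of_op T hone hhom)) (capacityOf_mem_Icc T hone hmono hhom ∅).1
  univ' := le_antisymm (capacityOf_mem_Icc T hone hmono hhom univ).2
    (le_capacityOf fun φ hφ => by
      rw [← hone, show φ = fun _ => 1 from funext fun x => hφ.eq_one x trivial])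
  mono' A B hAB := le_capacityOf fun φ hφ => capacityOf_le_map T hone hmono hhom
    ⟨hφ.continuous, hφ.mem_Icc, fun x hx => hφ.eq_one x (hAB hx)⟩
  usc' _ _ _ ha := capacityOf_usc T hone hmono hhom ha

include hone hmono hhom in
lemma op_capacityOf_preimage_le [NormalSpace X] {φ : X → ℝ} (hφc : Continuous φ)
    (hφ : ∀ x, φ x ∈ Icc (0:ℝ) 1) {t : ℝ} (ht : t ∈ Icc (0:ℝ) 1) :
    T.op (capacityOf μ (φ ⁻¹' Icc t 1)) t ≤ μ φ := by
  rcases ht.1.eq_or_lt with rfl | ht0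
  · rw [T.op_zero (capacityOf_mem_Icc T hone hmono hhom _)]
    exact (map_mem_Icc T hone hmono hhom hφc hφ).1
  refine le_of_tendsto (((T.continuous_op_right _).tendsto t).mono_left nhdsWithin_le_nhds)
    (Filter.eventually_of_mem (Ioo_mem_nhdsLT ht0) fun s hs => ?_)
  rw [T.comm']
  exact op_capacityOf_le T hone hmono hhom ⟨hs.1.le, hs.2.le.trans ht.2⟩
    (isClosed_Icc.preimage hφc) hφc hφ fun x hx => hs.2.trans_le hx.1

include hmax in
lemma map_finset_sup'_comp {ι : Type*} {s : Finset ι} (hs : s.Nonempty) {h : ι → ℝ → ℝ}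
    (hh_mono : ∀ i, Monotone (h i)) (hh_cont : ∀ i, Continuous (h i))
    (hh : ∀ i ∈ s, ∀ r, h i r ∈ Icc (0:ℝ) 1) {φ : X → ℝ} (hφc : Continuous φ) :
    μ (fun x => s.sup' hs fun i => h i (φ x)) = s.sup' hs fun i => μ (fun x => h i (φ x)) := by
  induction hs using Finset.Nonempty.cons_induction with
  | singleton i => simp only [Finset.sup'_singleton]
  | cons i s hi hs ih =>
    simp only [Finset.sup'_cons hs]
    rw [← ih fun j hj => hh j (Finset.mem_cons_of_mem hj)]
    exact hmax _ _ ((hh_cont i).comp hφc)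
      ((Continuous.finset_sup'_apply hs fun j _ => hh_cont j).comp hφc)
      (fun x => hh i (Finset.mem_cons_self i s) _)
      (fun x => sup'_mem_Icc hs fun j hj => hh j (Finset.mem_cons_of_mem hj) _)
      (comonotone_comp_of_monotone (hh_mono i)
        (fun _ _ hab => Finset.sup'_mono_fun fun j _ => hh_mono j hab) φ)

include hmono hhom in
lemma map_step_le {n i : ℕ} (hi : i < n) {φ : X → ℝ} (hφc : Continuous φ)
    (hφ : ∀ x, φ x ∈ Icc (0:ℝ) 1) :
    μ (fun x => T.step n i (φ x)) ≤
      T.op ((i + 1) / n) (capacityOf μ (φ ⁻¹' Icc (max 0 ((i - 1) / n)) 1)) := by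
  have hn : (0:ℝ) < n := by exact_mod_cast (Nat.zero_le i).trans_lt hi
  rw [show (fun x => T.step n i (φ x)) = fun x => T.op ((i + 1) / n) (ramp n i (φ x)) from rfl,
    hhom _ (add_one_div_mem_Icc hi) (fun x => ramp n i (φ x)) ((continuous_ramp n i).comp hφc)
      fun x => ramp_mem_Icc ..]
  refine T.monotone_op _ (map_le_capacityOf hmono ((continuous_ramp n i).comp hφc)
    (fun x => ramp_mem_Icc ..) fun x hx => ⟨max_le (hφ x).1 ?_, (hφ x).2⟩)
  rw [div_le_iff₀ hn]
  linarith [lt_mul_of_ramp_ne_zero hx]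

include hone hmono hmax hhom in
lemma map_le_tInt_inducedCapacity [NormalSpace X] [T2Space X] {φ : X → ℝ}
    (hφc : Continuous φ) (hφ : ∀ x, φ x ∈ Icc (0:ℝ) 1) :
    μ φ ≤ tInt T (inducedCapacity T hone hmono hhom) φ := by
  refine le_of_forall_pos_le_add fun ε hε => ?_
  obtain ⟨δ, hδ, hT⟩ := T.exists_pos_dist_op_lt hε
  obtain ⟨n, hn⟩ := exists_nat_gt (2 / δ)
  have hn0 : (0:ℝ) < n := (div_pos two_pos hδ).trans hn
  have hrange : (Finset.range n).Nonempty :=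
    Finset.nonempty_range_iff.2 (by exact_mod_cast hn0.ne')
  have hstep : ∀ i ∈ Finset.range n, ∀ r, T.step n i r ∈ Icc (0:ℝ) 1 :=
    fun i hi => T.step_mem_Icc (Finset.mem_range.1 hi)
  calc μ φ ≤ μ (fun x => (Finset.range n).sup' hrange fun i => T.step n i (φ x)) :=
        hmono _ _ hφc
          ((Continuous.finset_sup'_apply hrange fun i _ => T.continuous_step n i).comp hφc) hφ
          (fun x => sup'_mem_Icc hrange fun i hi => hstep i hi _)
          fun x => T.le_sup'_step hrange (hφ x)
    _ = (Finset.range n).sup' hrange fun i => μ (fun x => T.step n i (φ x)) :=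
        map_finset_sup'_comp hmax hrange (T.monotone_step n) (T.continuous_step n) hstep hφc
    _ ≤ tInt T (inducedCapacity T hone hmono hhom) φ + ε := Finset.sup'_le _ _ fun i hi => ?_
  have hi : i < n := Finset.mem_range.1 hi
  set t : ℝ := max 0 ((i - 1) / n)
  have ht : t ∈ Icc (0:ℝ) 1 := max_zero_sub_one_div_mem_Icc hi
  have hct : dist (((i:ℝ) + 1) / n) t < δ :=
    (dist_add_one_div_max_zero_sub_one_div_le n i).trans_lt ((div_lt_comm₀ hδ hn0).1 hn)
  have hν := capacityOf_mem_Icc T hone hmono hhom (φ ⁻¹' Icc t 1)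
  calc μ (fun x => T.step n i (φ x))
      ≤ T.op ((i + 1) / n) (capacityOf μ (φ ⁻¹' Icc t 1)) := map_step_le T hmono hhom hi hφc hφ
    _ ≤ T.op t (capacityOf μ (φ ⁻¹' Icc t 1)) + ε :=
        by linarith [(abs_sub_lt_iff.1 (hT _ (add_one_div_mem_Icc hi) t ht _ hν hct)).1]
    _ = T.op (capacityOf μ (φ ⁻¹' Icc t 1)) t + ε := by rw [T.comm']
    _ ≤ _ := by gcongr; exact le_tInt T (inducedCapacity T hone hmono hhom) φ ht

end Functional

/-- Representation theorem: a functional on `C(X,[0,1])` satisfies normalization, monotonicity,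
comonotone maxitivity and t-norm homogeneity iff it is the t-normed integral with respect to a
capacity, which is then unique (on closed sets). -/
theorem tInt_representation {X : Type*} [TopologicalSpace X] [CompactSpace X] [T2Space X]
    (T : Tnorm) (μ : (X → ℝ) → ℝ) :
    ((μ (fun _ => 1) = 1) ∧
     (∀ φ ψ : X → ℝ, Continuous φ → Continuous ψ →
        (∀ x, φ x ∈ Set.Icc (0:ℝ) 1) → (∀ x, ψ x ∈ Set.Icc (0:ℝ) 1) →
        (∀ x, φ x ≤ ψ x) → μ φ ≤ μ ψ) ∧
     (∀ φ ψ : X → ℝ, Continuous φ → Continuous ψ →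
        (∀ x, φ x ∈ Set.Icc (0:ℝ) 1) → (∀ x, ψ x ∈ Set.Icc (0:ℝ) 1) →
        Comonotone φ ψ → μ (fun x => max (φ x) (ψ x)) = max (μ φ) (μ ψ)) ∧
     (∀ c ∈ Set.Icc (0:ℝ) 1, ∀ φ : X → ℝ, Continuous φ → (∀ x, φ x ∈ Set.Icc (0:ℝ) 1) →
        μ (fun x => T.op c (φ x)) = T.op c (μ φ)))
    ↔
    (∃ ν : Capacity X,
      (∀ φ : X → ℝ, Continuous φ → (∀ x, φ x ∈ Set.Icc (0:ℝ) 1) → μ φ = tInt T ν φ) ∧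
      (∀ ν' : Capacity X,
        (∀ φ : X → ℝ, Continuous φ → (∀ x, φ x ∈ Set.Icc (0:ℝ) 1) → μ φ = tInt T ν' φ) →
        ∀ F : Set X, IsClosed F → ν'.toFun F = ν.toFun F)) := by
  constructor
  · rintro ⟨hone, hmono, hmax, hhom⟩
    refine ⟨inducedCapacity T hone hmono hhom, fun φ hφc hφ => ?_, fun ν' hν' F hF => ?_⟩
    · exact le_antisymm (map_le_tInt_inducedCapacity T hone hmono hmax hhom hφc hφ)
        (tInt_le T _ fun t ht => op_capacityOf_preimage_le T hone hmono hhom hφc hφ ht)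
    · rw [ν'.eq_capacityOf_tInt T hF]
      exact capacityOf_congr fun φ hφc hφ => (hν' φ hφc hφ).symm
  · rintro ⟨ν, hν, -⟩
    refine ⟨?_, fun φ ψ hφc hψc hφ hψ hφψ => ?_, fun φ ψ hφc hψc hφ hψ hφψ => ?_,
      fun c hc φ hφc hφ => ?_⟩
    · rw [hν _ continuous_const fun _ => by norm_num, tInt_one]
    · rw [hν φ hφc hφ, hν ψ hψc hψ]
      exact tInt_mono T ν (fun x => (hψ x).2) hφψ
    · rw [hν _ (hφc.max hψc) fun x => ⟨le_max_of_le_left (hφ x).1, max_le (hφ x).2 (hψ x).2⟩,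
        hν φ hφc hφ, hν ψ hψc hψ]
      exact tInt_max T ν (fun x => (hφ x).2) (fun x => (hψ x).2) hφψ
    · rw [hν _ (T.continuous_op continuous_const hφc) fun x => T.mem' _ _ hc (hφ x),
        hν φ hφc hφ]
      exact tInt_op T ν hφ hc
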